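/- Suppose (a₁,b₁,T₁) and (a₂,b₂,T₂) are 4-chained, and write G_j = G_{a_j,b_j,T_j} for j = 1,2. Then for every integer k ≥ 1 the interval [s_{8k−2}(b₂,T₂) + (π/6)·T₂·b₂^{8k−2}, s_{8k−1}(b₂,T₂) − (π/6)·T₂·b₂^{8k−2}] is nonempty, and for every χ in this interval one has G₁(χ) ≤ −(1/2)·a₂·T₂·b₂^{8k−2} and G₂(χ) ≥ (1/2)·a₂·T₂·b₂^{8k−2}. -/

import Mathlib

open Real Filter Set

/-- Breakpoints `s_n(b,T) = T·π·(b^n − 1)/(b − 1)`. -/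
noncomputable def brk (b T : ℝ) (n : ℕ) : ℝ := T * Real.pi * (b ^ n - 1) / (b - 1)

/-- Index of the segment containing `x ≥ 0`: the unique `m` with `s_m ≤ x < s_{m+1}`
(for `b > 1`, `T > 0`). -/
noncomputable def seg (b T x : ℝ) : ℕ := sInf {n : ℕ | x < brk b T (n + 1)}

/-- The saturated Nussbaum function `N_{a,b,T}`: on `[s_{n−1}, s_n)` (with `m = n − 1`)
it equals `(−1)^m·a·cos((χ − s_m)/(b^m·T))`, extended evenly to `χ < 0`. -/
noncomputable def satN (a b T : ℝ) (χ : ℝ) : ℝ :=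
  (-1 : ℝ) ^ (seg b T |χ|) * a *
    Real.cos ((|χ| - brk b T (seg b T |χ|)) / (b ^ (seg b T |χ|) * T))

/-- The integrated function `G_{a,b,T}(χ) = ∫_0^χ N_{a,b,T}(τ) dτ`. -/
noncomputable def satG (a b T : ℝ) (χ : ℝ) : ℝ := ∫ τ in (0:ℝ)..χ, satN a b T τ

/-- Two triples `(a₁,b₁,T₁)`, `(a₂,b₂,T₂)` are 4-chained. -/
def Chained4 (a₁ b₁ T₁ a₂ b₂ T₂ : ℝ) : Prop :=
  0 < a₂ ∧ 1 < b₂ ∧ 0 < T₂ ∧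
    b₁ = b₂ ^ 4 ∧ a₁ = (b₂ ^ 3 / (1 + b₂ + b₂ ^ 2 + b₂ ^ 3)) * a₂ ∧
    T₁ = (1 + b₂ + b₂ ^ 2 + b₂ ^ 3) * T₂

/-!
Since `G` vanishes at every breakpoint, on the `m`-th segment it is a single arch,
`G(χ) = (-1)^m a b^m T sin((χ - s_m) / (b^m T))`. Chaining gives `s_n(b₁,T₁) = s_{4n}(b₂,T₂)`, so the
positive arch of `G₂` on `[s_{8k-2}, s_{8k-1}]` lies inside the negative arch of `G₁` on
`[s_{8k-4}, s_{8k}]`, of amplitude `a₂T₂b₂^{8k-1}`. On the middle part of the former the phase of `G₁`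
stays in `[π/(6b₂), π - π/(6b₂)]`, and concavity of `sin` gives `sin(π/(6b₂)) ≥ 1/(2b₂)`.
-/

open MeasureTheory intervalIntegral

section Breakpoints

variable {b T : ℝ}

lemma brk_zero (b T : ℝ) : brk b T 0 = 0 := by simp [brk]

lemma brk_succ (hb : b ≠ 1) (n : ℕ) : brk b T (n + 1) = brk b T n + π * T * b ^ n := by
  have : b - 1 ≠ 0 := sub_ne_zero.2 hb
  unfold brk
  field_simp
  ring

lemma brk_strictMono (hb : 1 < b) (hT : 0 < T) : StrictMono (brk b T) :=
  strictMono_nat_of_lt_succ fun n => by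
    rw [brk_succ hb.ne']
    linarith [show 0 < π * T * b ^ n by positivity]

lemma brk_nonneg (hb : 1 < b) (hT : 0 < T) (n : ℕ) : 0 ≤ brk b T n :=
  brk_zero b T ▸ (brk_strictMono hb hT).monotone n.zero_le

lemma brk_pow_four (b T : ℝ) (n : ℕ) :
    brk (b ^ 4) ((1 + b + b ^ 2 + b ^ 3) * T) n = brk b T (4 * n) := by
  rcases eq_or_ne b 1 with rfl | hb1
  · simp [brk]
  rcases eq_or_ne b (-1) with rfl | hb2
  · norm_num [brk]
  have hS : 1 + b + b ^ 2 + b ^ 3 ≠ 0 := by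
    have : 1 + b + b ^ 2 + b ^ 3 = (1 + b) * (1 + b ^ 2) := by ring
    rw [this]
    exact mul_ne_zero (fun h => hb2 (by linarith)) (by positivity)
  have h1 : b - 1 ≠ 0 := sub_ne_zero.2 hb1
  have h4 : b ^ 4 - 1 = (b - 1) * (1 + b + b ^ 2 + b ^ 3) := by ring
  unfold brk
  rw [pow_mul, h4]
  field_simp

lemma seg_eq_of_mem_Ico (hb : 1 < b) (hT : 0 < T) {m : ℕ} {x : ℝ}
    (hx : x ∈ Ico (brk b T m) (brk b T (m + 1))) : seg b T x = m := by
  refine le_antisymm (Nat.sInf_le hx.2) (le_csInf ⟨m, hx.2⟩ fun n hn => ?_)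
  have : m < n + 1 := (brk_strictMono hb hT).lt_iff_lt.1 (hx.1.trans_lt hn)
  omega

end Breakpoints

namespace Real

lemma sin_le_sin_of_le_of_le_pi_sub {x y : ℝ} (hx : 0 ≤ x) (hxy : x ≤ y) (hy : y ≤ π - x) :
    sin x ≤ sin y := by
  rcases le_total y (π / 2) with h | h
  · exact sin_le_sin_of_le_of_le_pi_div_two (by linarith [pi_pos]) h hxy
  · rw [← sin_pi_sub y]
    exact sin_le_sin_of_le_of_le_pi_div_two (by linarith [pi_pos]) (by linarith) (by linarith)

lemma mul_sin_le_sin_mul {t x : ℝ} (ht₀ : 0 ≤ t) (ht₁ : t ≤ 1) (hx₀ : 0 ≤ x) (hx : x ≤ π) :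
    t * sin x ≤ sin (t * x) := by
  simpa using strictConcaveOn_sin_Icc.concaveOn.2 ⟨le_rfl, pi_pos.le⟩ ⟨hx₀, hx⟩
    (sub_nonneg.2 ht₁) ht₀ (by ring)

end Real

section Integral

variable {a b T : ℝ}

lemma satN_eqOn_Ico (a : ℝ) (hb : 1 < b) (hT : 0 < T) (m : ℕ) :
    EqOn (satN a b T) (fun x => (-1) ^ m * a * cos ((x - brk b T m) / (b ^ m * T)))
      (Ico (brk b T m) (brk b T (m + 1))) := fun x hx => by
  rw [satN, abs_of_nonneg ((brk_nonneg hb hT m).trans hx.1), seg_eq_of_mem_Ico hb hT hx]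

lemma intervalIntegrable_satN_of_mem_Icc (a : ℝ) (hb : 1 < b) (hT : 0 < T) (m : ℕ) {χ : ℝ}
    (hχ : χ ∈ Icc (brk b T m) (brk b T (m + 1))) :
    IntervalIntegrable (satN a b T) volume (brk b T m) χ := by
  refine (Continuous.intervalIntegrable (by fun_prop) _ _).congr_uIoo
    (((satN_eqOn_Ico a hb hT m).mono ?_).symm)
  rw [uIoo_of_le hχ.1]
  exact Ioo_subset_Ico_self.trans (Ico_subset_Ico_right hχ.2)

lemma integral_satN_of_mem_Icc (a : ℝ) (hb : 1 < b) (hT : 0 < T) (m : ℕ) {χ : ℝ}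
    (hχ : χ ∈ Icc (brk b T m) (brk b T (m + 1))) :
    ∫ τ in brk b T m..χ, satN a b T τ =
      (-1) ^ m * a * (b ^ m * T) * sin ((χ - brk b T m) / (b ^ m * T)) := by
  have hc : b ^ m * T ≠ 0 := by positivity
  rw [integral_congr_Ioo_of_le hχ.1 ((satN_eqOn_Ico a hb hT m).mono
      (Ioo_subset_Ico_self.trans (Ico_subset_Ico_right hχ.2))),
    intervalIntegral.integral_const_mul, integral_comp_sub_right (fun τ => cos (τ / (b ^ m * T))),
    integral_comp_div (fun τ => cos τ) hc, integral_cos]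
  simp [mul_assoc]

lemma intervalIntegrable_satN_zero_brk (a : ℝ) (hb : 1 < b) (hT : 0 < T) (m : ℕ) :
    IntervalIntegrable (satN a b T) volume 0 (brk b T m) := by
  induction m with
  | zero => simp [brk_zero]
  | succ n ih =>
    exact ih.trans (intervalIntegrable_satN_of_mem_Icc a hb hT n
      ⟨(brk_strictMono hb hT).monotone n.le_succ, le_rfl⟩)

lemma satG_eq_satG_brk_add (a : ℝ) (hb : 1 < b) (hT : 0 < T) (m : ℕ) {χ : ℝ}
    (hχ : χ ∈ Icc (brk b T m) (brk b T (m + 1))) :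
    satG a b T χ = satG a b T (brk b T m) + ∫ τ in brk b T m..χ, satN a b T τ :=
  (integral_add_adjacent_intervals (intervalIntegrable_satN_zero_brk a hb hT m)
    (intervalIntegrable_satN_of_mem_Icc a hb hT m hχ)).symm

lemma satG_brk (a : ℝ) (hb : 1 < b) (hT : 0 < T) (m : ℕ) : satG a b T (brk b T m) = 0 := by
  induction m with
  | zero => simp [satG, brk_zero]
  | succ n ih =>
    have hπ : (brk b T (n + 1) - brk b T n) / (b ^ n * T) = π := by
      rw [brk_succ hb.ne']
      field_simp
      ring
    have hχ : brk b T (n + 1) ∈ Icc (brk b T n) (brk b T (n + 1)) :=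
      ⟨(brk_strictMono hb hT).monotone n.le_succ, le_rfl⟩
    rw [satG_eq_satG_brk_add a hb hT n hχ, ih, integral_satN_of_mem_Icc a hb hT n hχ, hπ,
      sin_pi, mul_zero, zero_add]

theorem satG_eq_of_mem_Icc (a : ℝ) (hb : 1 < b) (hT : 0 < T) (m : ℕ) {χ : ℝ}
    (hχ : χ ∈ Icc (brk b T m) (brk b T (m + 1))) :
    satG a b T χ = (-1) ^ m * a * (b ^ m * T) * sin ((χ - brk b T m) / (b ^ m * T)) := by
  rw [satG_eq_satG_brk_add a hb hT m hχ, satG_brk a hb hT m, zero_add,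
    integral_satN_of_mem_Icc a hb hT m hχ]

end Integral

theorem sin_mul_le_neg_one_pow_mul_satG {a b T δ χ : ℝ} (ha : 0 ≤ a) (hb : 1 < b) (hT : 0 < T)
    (hδ : 0 ≤ δ) (m : ℕ) (h₁ : brk b T m + δ * T * b ^ m ≤ χ)
    (h₂ : χ ≤ brk b T (m + 1) - δ * T * b ^ m) :
    a * T * b ^ m * sin δ ≤ (-1) ^ m * satG a b T χ := by
  have hc : 0 < b ^ m * T := by positivity
  have hstep := brk_succ (T := T) hb.ne' m
  have hmargin : 0 ≤ δ * T * b ^ m := by positivity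
  have hθ₁ : δ ≤ (χ - brk b T m) / (b ^ m * T) := by
    rw [le_div_iff₀ hc]
    linarith
  have hθ₂ : (χ - brk b T m) / (b ^ m * T) ≤ π - δ := by
    rw [div_le_iff₀ hc]
    linarith
  have hsign : (-1 : ℝ) ^ m * (-1) ^ m = 1 := by rw [← mul_pow]; norm_num
  rw [satG_eq_of_mem_Icc a hb hT m ⟨by linarith, by linarith⟩]
  calc a * T * b ^ m * sin δ ≤ a * T * b ^ m * sin ((χ - brk b T m) / (b ^ m * T)) :=
        mul_le_mul_of_nonneg_left (sin_le_sin_of_le_of_le_pi_sub hδ hθ₁ hθ₂) (by positivity)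
    _ = _ := by linear_combination (-(a * T * b ^ m * sin ((χ - brk b T m) / (b ^ m * T)))) * hsign

theorem Chained4.half_mul_le_neg_one_pow_mul_satG {a₁ b₁ T₁ a₂ b₂ T₂ χ : ℝ}
    (h : Chained4 a₁ b₁ T₁ a₂ b₂ T₂) (n : ℕ)
    (h₁ : brk b₂ T₂ (4 * n + 2) + π / 6 * T₂ * b₂ ^ (4 * n + 2) ≤ χ)
    (h₂ : χ ≤ brk b₂ T₂ (4 * n + 3) - π / 6 * T₂ * b₂ ^ (4 * n + 2)) :
    1 / 2 * (a₂ * T₂ * b₂ ^ (4 * n + 2)) ≤ (-1) ^ n * satG a₁ b₁ T₁ χ := by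
  obtain ⟨ha, hb, hT, rfl, rfl, rfl⟩ := h
  set S := 1 + b₂ + b₂ ^ 2 + b₂ ^ 3
  have hb₀ : 0 < b₂ := by linarith
  have hS : 0 < S := by positivity
  have hs := fun i => brk_succ (T := T₂) hb.ne' i
  have key := sin_mul_le_neg_one_pow_mul_satG (a := b₂ ^ 3 / S * a₂) (b := b₂ ^ 4) (T := S * T₂)
    (δ := b₂⁻¹ * (π / 6)) (χ := χ) (by positivity) (one_lt_pow₀ hb (by norm_num)) (by positivity)
    (by positivity) n ?_ ?_
  · calc 1 / 2 * (a₂ * T₂ * b₂ ^ (4 * n + 2))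
          = a₂ * T₂ * b₂ ^ (4 * n + 3) * (b₂⁻¹ * sin (π / 6)) := by
            rw [sin_pi_div_six]; field_simp; ring
      _ ≤ a₂ * T₂ * b₂ ^ (4 * n + 3) * sin (b₂⁻¹ * (π / 6)) := by
            gcongr
            exact mul_sin_le_sin_mul (by positivity) (inv_le_one_of_one_le₀ hb.le) (by positivity)
              (by linarith [pi_pos])
      _ = b₂ ^ 3 / S * a₂ * (S * T₂) * (b₂ ^ 4) ^ n * sin (b₂⁻¹ * (π / 6)) := by
            field_simp; ring
      _ ≤ _ := key
  · have : brk b₂ T₂ (4 * n + 2) + π / 6 * T₂ * b₂ ^ (4 * n + 2)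
        - (brk b₂ T₂ (4 * n) + b₂⁻¹ * (π / 6) * (S * T₂) * (b₂ ^ 4) ^ n)
        = π * T₂ * b₂ ^ (4 * n) / (6 * b₂) * (5 * b₂ ^ 2 + 5 * b₂ - 1) := by
      rw [hs, hs]; field_simp; ring
    have hlow : 0 ≤ 5 * b₂ ^ 2 + 5 * b₂ - 1 := by nlinarith
    rw [brk_pow_four]
    linarith [show 0 ≤ π * T₂ * b₂ ^ (4 * n) / (6 * b₂) * (5 * b₂ ^ 2 + 5 * b₂ - 1) by positivity]
  · have : brk b₂ T₂ (4 * (n + 1)) - b₂⁻¹ * (π / 6) * (S * T₂) * (b₂ ^ 4) ^ n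
        - (brk b₂ T₂ (4 * n + 3) - π / 6 * T₂ * b₂ ^ (4 * n + 2))
        = π * T₂ * b₂ ^ (4 * n) / (6 * b₂) * (6 * b₂ ^ 4 - b₂ ^ 2 - b₂ - 1) := by
      rw [show 4 * (n + 1) = 4 * n + 3 + 1 by ring, hs]; field_simp; ring
    have hhigh : 0 ≤ 6 * b₂ ^ 4 - b₂ ^ 2 - b₂ - 1 := by
      have h₀ : 1 ≤ b₂ ^ 4 := one_le_pow₀ hb.le
      have h₁ : b₂ ≤ b₂ ^ 4 := by simpa using pow_le_pow_right₀ hb.le (show 1 ≤ 4 by norm_num)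
      have h₂ : b₂ ^ 2 ≤ b₂ ^ 4 := pow_le_pow_right₀ hb.le (by norm_num)
      linarith
    rw [brk_pow_four]
    linarith [show 0 ≤ π * T₂ * b₂ ^ (4 * n) / (6 * b₂) * (6 * b₂ ^ 4 - b₂ ^ 2 - b₂ - 1) by
      positivity]

/-- on a common interval inside the `(8k−1)`-th fast segment,
`G₁ ≤ −(1/2)·a₂·T₂·b₂^{8k−2}` while `G₂ ≥ (1/2)·a₂·T₂·b₂^{8k−2}`. -/
theorem chained_opposite_signs_interval (a₁ b₁ T₁ a₂ b₂ T₂ : ℝ)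
    (h : Chained4 a₁ b₁ T₁ a₂ b₂ T₂) (k : ℕ) (hk : 1 ≤ k) :
    brk b₂ T₂ (8 * k - 2) + (Real.pi / 6) * T₂ * b₂ ^ (8 * k - 2) ≤
      brk b₂ T₂ (8 * k - 1) - (Real.pi / 6) * T₂ * b₂ ^ (8 * k - 2) ∧
    ∀ χ ∈ Set.Icc (brk b₂ T₂ (8 * k - 2) + (Real.pi / 6) * T₂ * b₂ ^ (8 * k - 2))
        (brk b₂ T₂ (8 * k - 1) - (Real.pi / 6) * T₂ * b₂ ^ (8 * k - 2)),
      satG a₁ b₁ T₁ χ ≤ -(1 / 2) * (a₂ * T₂ * b₂ ^ (8 * k - 2)) ∧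
      (1 / 2) * (a₂ * T₂ * b₂ ^ (8 * k - 2)) ≤ satG a₂ b₂ T₂ χ := by
  have ⟨ha, hb, hT, _⟩ := h
  obtain ⟨j, rfl⟩ : ∃ j, k = j + 1 := ⟨k - 1, by omega⟩
  rw [show 8 * (j + 1) - 2 = 4 * (2 * j + 1) + 2 by omega,
    show 8 * (j + 1) - 1 = 4 * (2 * j + 1) + 2 + 1 by omega]
  have hstep := brk_succ (T := T₂) hb.ne' (4 * (2 * j + 1) + 2)
  refine ⟨by linarith [show 0 < π * T₂ * b₂ ^ (4 * (2 * j + 1) + 2) by positivity],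
    fun χ hχ => ⟨?_, ?_⟩⟩
  · have h₁ := h.half_mul_le_neg_one_pow_mul_satG (2 * j + 1) hχ.1 hχ.2
    rw [Odd.neg_one_pow ⟨j, rfl⟩] at h₁
    linarith
  · have h₂ := sin_mul_le_neg_one_pow_mul_satG ha.le hb hT (by positivity) _ hχ.1 hχ.2
    rw [Even.neg_one_pow ⟨4 * j + 3, by ring⟩, sin_pi_div_six] at h₂
    linarith
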